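/- arXiv:1906.11007 — 4 statements merged into one kernel-verified Lean document; each statement's English description precedes it below -/
import Mathlib

section
/- Let A ⊂ ℝ be a nonempty compact set. Then for every ε > 0 there exists a point x ∈ A such that both dimH(A ∩ (-∞, x]) ≥ dimH(A) - ε and dimH(A ∩ [x, ∞)) ≥ dimH(A) - ε. -/
/-!
Fix `t = dimH A - ε < dimH A`. Let `x₁` be the infimum of the points `x` with
`t < dimH (A ∩ Iic x)`; by countable stability of `dimH`, `A ∩ Iio x₁` has dimension at most `t`.
Symmetrically, `A ∩ Ioi x₂` has dimension at most `t` for the supremum `x₂` of the points `x` with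
`t < dimH (A ∩ Ici x)`. Since `A` cannot be covered by these two sets and the finite set
`{x₁, x₂}`, it meets `Ioo x₁ x₂`, and any such point splits `A` as required.
-/

open Set

theorem dimH_neg {E : Type*} [NormedAddCommGroup E] (s : Set E) : dimH (-s) = dimH s := by
  rw [← image_neg_eq_neg, isometry_neg.dimH_image]

theorem dimH_le_max_of_disjoint_Ioo {X : Type*} [EMetricSpace X] [LinearOrder X] {s : Set X}
    {a b : X} (h : Disjoint s (Ioo a b)) :
    dimH s ≤ max (dimH (s ∩ Iio a)) (dimH (s ∩ Ioi b)) := by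
  have hcover : s ⊆ (s ∩ Iio a ∪ s ∩ Ioi b) ∪ {a, b} := by
    intro x hx
    have hx' : x ≤ a ∨ b ≤ x := by
      by_contra! hab
      exact h.notMem_of_mem_left hx hab
    rcases hx' with hxa | hbx
    · rcases hxa.lt_or_eq with hxa | rfl <;> simp [*]
    · rcases hbx.lt_or_eq with hbx | rfl <;> simp [*]
  calc dimH s ≤ dimH ((s ∩ Iio a ∪ s ∩ Ioi b) ∪ {a, b}) := dimH_mono hcover
    _ = max (dimH (s ∩ Iio a)) (dimH (s ∩ Ioi b)) := by
      rw [dimH_union, dimH_union, dimH_finite (toFinite ({a, b} : Set X)), max_eq_left zero_le]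

theorem dimH_inter_Iio_le {s : Set ℝ} {c : ℝ} {t : ENNReal}
    (h : ∀ y < c, dimH (s ∩ Iic y) ≤ t) : dimH (s ∩ Iio c) ≤ t := by
  have hcover : s ∩ Iio c ⊆ ⋃ q : {q : ℚ // (q : ℝ) < c}, s ∩ Iic (q : ℝ) := by
    rintro x ⟨hxs, hxc⟩
    obtain ⟨q, hxq, hqc⟩ := exists_rat_btwn (mem_Iio.1 hxc)
    exact mem_iUnion.2 ⟨⟨q, hqc⟩, hxs, hxq.le⟩
  calc dimH (s ∩ Iio c) ≤ dimH (⋃ q : {q : ℚ // (q : ℝ) < c}, s ∩ Iic (q : ℝ)) :=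
        dimH_mono hcover
    _ = ⨆ q : {q : ℚ // (q : ℝ) < c}, dimH (s ∩ Iic (q : ℝ)) := dimH_iUnion _
    _ ≤ t := iSup_le fun q => h q q.2

theorem exists_dimH_inter_Iio_le_of_lt_dimH {s : Set ℝ} {t : ENNReal} (hb : BddBelow s)
    (ha : BddAbove s) (ht : t < dimH s) :
    ∃ c, dimH (s ∩ Iio c) ≤ t ∧ ∀ x, c < x → t < dimH (s ∩ Iic x) := by
  set S := {x | t < dimH (s ∩ Iic x)}
  obtain ⟨m, hm⟩ := hb
  obtain ⟨M, hM⟩ := ha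
  have hSne : S.Nonempty := ⟨M, by rwa [mem_ofPred_eq, inter_eq_left.2 (show s ⊆ Iic M from hM)]⟩
  have hSbdd : BddBelow S := by
    refine ⟨m, fun x hx => ?_⟩
    obtain ⟨y, hys, hyx⟩ : (s ∩ Iic x).Nonempty :=
      nonempty_iff_ne_empty.2 fun h => by simp [S, h] at hx
    exact (hm hys).trans hyx
  refine ⟨sInf S, dimH_inter_Iio_le fun y hy => not_lt.1 fun hyS => ?_, fun x hx => ?_⟩
  · exact (csInf_le hSbdd hyS).not_gt hy
  · obtain ⟨z, hzS, hzx⟩ := (csInf_lt_iff hSbdd hSne).1 hx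
    exact hzS.trans_le (dimH_mono (inter_subset_inter_right _ (Iic_subset_Iic.2 hzx.le)))

theorem exists_dimH_inter_Ioi_le_of_lt_dimH {s : Set ℝ} {t : ENNReal} (hb : BddBelow s)
    (ha : BddAbove s) (ht : t < dimH s) :
    ∃ c, dimH (s ∩ Ioi c) ≤ t ∧ ∀ x, x < c → t < dimH (s ∩ Ici x) := by
  obtain ⟨c, hc, hlt⟩ := exists_dimH_inter_Iio_le_of_lt_dimH (bddBelow_neg.2 ha)
    (bddAbove_neg.2 hb) (by rwa [dimH_neg])
  refine ⟨-c, ?_, fun x hx => ?_⟩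
  · rwa [← dimH_neg, inter_neg, neg_Ioi, neg_neg]
  · have := hlt (-x) (lt_neg_of_lt_neg hx)
    rwa [← dimH_neg, inter_neg, neg_Ici]

/-- A nonempty compact set `A ⊆ ℝ` can be split at one of its points into a left part and a
right part, each of Hausdorff dimension at least `dimH A - ε`. -/
theorem stmt_0 (A : Set ℝ) (hA : IsCompact A) (hne : A.Nonempty) :
    ∀ ε : ℝ, 0 < ε → ∃ x ∈ A,
      dimH A - ENNReal.ofReal ε ≤ dimH (A ∩ Set.Iic x) ∧
      dimH A - ENNReal.ofReal ε ≤ dimH (A ∩ Set.Ici x) := by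
  intro ε hε
  by_cases hsmall : dimH A ≤ ENNReal.ofReal ε
  · obtain ⟨x, hx⟩ := hne
    rw [tsub_eq_zero_of_le hsmall]
    exact ⟨x, hx, zero_le, zero_le⟩
  have ht : dimH A - ENNReal.ofReal ε < dimH A := ENNReal.sub_lt_self (Real.dimH_ne_top A)
    (pos_of_gt (not_le.1 hsmall)).ne' (ENNReal.ofReal_pos.2 hε).ne'
  obtain ⟨x₁, hx₁, hleft⟩ := exists_dimH_inter_Iio_le_of_lt_dimH hA.bddBelow hA.bddAbove ht
  obtain ⟨x₂, hx₂, hright⟩ := exists_dimH_inter_Ioi_le_of_lt_dimH hA.bddBelow hA.bddAbove ht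
  obtain ⟨x, hxA, h₁, h₂⟩ := not_disjoint_iff_nonempty_inter.1 fun hdisj =>
    ht.not_ge ((dimH_le_max_of_disjoint_Ioo hdisj).trans (max_le hx₁ hx₂))
  exact ⟨x, hxA, (hleft x h₁).le, (hright x h₂).le⟩
end

section
/- Let A₁,…,A_N ∈ GL₂(ℝ) and suppose there exist constants C > 0 and 0 < τ < 1 such that |det(A_{i₁}⋯A_{i_n})| / ‖A_{i₁}⋯A_{i_n}‖² ≤ C τⁿ for every finite word (i₁,…,i_n) ∈ {1,…,N}ⁿ and every n ∈ ℕ. Then for every σ-invariant ergodic probability measure ν on {1,…,N}^ℕ, the Lyapunov exponents satisfy χ₁(ν) < χ₂(ν), i.e. the Lyapunov spectrum is simple. -/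
/-!
Follow the products `Pₙ = A_{i₀} ⋯ A_{i_{n-1}}` and `Qₙ = A_{i₀}⁻¹ ⋯ A_{i_{n-1}}⁻¹` along one
sequence that is generic for both exponents. Since `det Qₙ = (det Pₙ)⁻¹` and `|det M| ≤ ‖M‖²` for
`2 × 2` matrices, the domination hypothesis gives `1 ≤ C τⁿ (‖Pₙ‖ ‖Qₙ‖)²`. Taking logarithms and
dividing by `n`, the gap `χ₂ - χ₁ = lim (log ‖Pₙ‖ + log ‖Qₙ‖) / n` is at least `-(log τ) / 2 > 0`.
-/

open MeasureTheory Filter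

/-- The Euclidean operator norm of a 2×2 real matrix. -/
noncomputable def mnorm (M : Matrix (Fin 2) (Fin 2) ℝ) : ℝ :=
  ‖Matrix.toEuclideanCLM (𝕜 := ℝ) M‖

open Topology

theorem Matrix.det_list_prod_ofFn_inv {K n : Type*} [Field K] [Fintype n] [DecidableEq n]
    {m : ℕ} (B : Fin m → Matrix n n K) :
    (List.ofFn fun k => (B k)⁻¹).prod.det = ((List.ofFn B).prod.det)⁻¹ := by
  induction m with
  | zero => simp
  | succ m ih =>
    simp only [List.ofFn_succ, List.prod_cons, Matrix.det_mul, ih, Matrix.det_nonsing_inv,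
      Ring.inverse_eq_inv', mul_inv]

theorem Matrix.det_fin_two_sq_le {R : Type*} [CommRing R] [LinearOrder R] [IsStrictOrderedRing R]
    (M : Matrix (Fin 2) (Fin 2) R) :
    M.det ^ 2 ≤ (M 0 0 ^ 2 + M 1 0 ^ 2) * (M 0 1 ^ 2 + M 1 1 ^ 2) := by
  rw [Matrix.det_fin_two]
  nlinarith [sq_nonneg (M 0 0 * M 0 1 + M 1 0 * M 1 1)]

lemma sq_col_le_mnorm_sq (M : Matrix (Fin 2) (Fin 2) ℝ) (j : Fin 2) :
    M 0 j ^ 2 + M 1 j ^ 2 ≤ mnorm M ^ 2 := by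
  set T := Matrix.toEuclideanCLM (𝕜 := ℝ) M
  have hcol : ‖T (EuclideanSpace.single j 1)‖ ^ 2 = M 0 j ^ 2 + M 1 j ^ 2 := by
    rw [EuclideanSpace.norm_eq, Real.sq_sqrt (by positivity)]
    simp [T, Matrix.ofLp_toEuclideanCLM, Matrix.mulVec_single, Fin.sum_univ_two]
  rw [← hcol, mnorm]
  gcongr
  simpa using T.le_opNorm (EuclideanSpace.single j 1)

lemma abs_det_le_mnorm_sq (M : Matrix (Fin 2) (Fin 2) ℝ) : |M.det| ≤ mnorm M ^ 2 := by
  rw [← sq_le_sq₀ (abs_nonneg _) (sq_nonneg _), sq_abs]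
  calc M.det ^ 2 ≤ (M 0 0 ^ 2 + M 1 0 ^ 2) * (M 0 1 ^ 2 + M 1 1 ^ 2) := M.det_fin_two_sq_le
    _ ≤ mnorm M ^ 2 * mnorm M ^ 2 := by
      gcongr
      · exact sq_col_le_mnorm_sq M 0
      · exact sq_col_le_mnorm_sq M 1
    _ = (mnorm M ^ 2) ^ 2 := by ring

lemma one_le_mul_mnorm_mul_mnorm_sq {P Q : Matrix (Fin 2) (Fin 2) ℝ} {c : ℝ}
    (hP : P.det ≠ 0) (hQ : Q.det = P.det⁻¹) (h : |P.det| / mnorm P ^ 2 ≤ c) :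
    1 ≤ c * (mnorm P * mnorm Q) ^ 2 := by
  have hPpos : 0 < mnorm P ^ 2 := (abs_pos.mpr hP).trans_le (abs_det_le_mnorm_sq P)
  have hPc : |P.det| ≤ c * mnorm P ^ 2 := (div_le_iff₀ hPpos).mp h
  have hQ' : |P.det|⁻¹ ≤ mnorm Q ^ 2 := by
    simpa [hQ, abs_inv] using abs_det_le_mnorm_sq Q
  calc (1 : ℝ) = |P.det| * |P.det|⁻¹ := (mul_inv_cancel₀ (abs_ne_zero.mpr hP)).symm
    _ ≤ c * mnorm P ^ 2 * mnorm Q ^ 2 :=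
      mul_le_mul hPc hQ' (inv_nonneg.mpr (abs_nonneg _)) ((abs_nonneg _).trans hPc)
    _ = c * (mnorm P * mnorm Q) ^ 2 := by ring

lemma neg_log_le_two_mul_log_add_log {a b c : ℝ} (hc : 0 < c)
    (h : 1 ≤ c * (a * b) ^ 2) : -Real.log c ≤ 2 * (Real.log a + Real.log b) := by
  have hab : a * b ≠ 0 := by
    rintro hab
    norm_num [hab] at h
  have ha' : a ≠ 0 := left_ne_zero_of_mul hab
  have hb' : b ≠ 0 := right_ne_zero_of_mul hab
  have := Real.log_le_log one_pos h
  rw [Real.log_one, Real.log_mul hc.ne' (by positivity), Real.log_pow, Real.log_mul ha' hb']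
    at this
  push_cast at this
  linarith

lemma le_of_tendsto_div_of_affine_le {s : ℕ → ℝ} {L c d : ℝ}
    (hs : Tendsto (fun n : ℕ => s n / n) atTop (𝓝 L)) (h : ∀ n : ℕ, c + n * d ≤ s n) :
    d ≤ L := by
  have hlim : Tendsto (fun n : ℕ => c * (1 / (n : ℝ)) + d) atTop (𝓝 (c * 0 + d)) :=
    (tendsto_one_div_atTop_nhds_zero_nat.const_mul c).add_const d
  rw [mul_zero, zero_add] at hlim
  refine le_of_tendsto_of_tendsto hlim hs ?_
  filter_upwards [eventually_gt_atTop 0] with n hn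
  have hn' : (0 : ℝ) < n := by exact_mod_cast hn
  rw [le_div_iff₀ hn']
  calc (c * (1 / (n : ℝ)) + d) * n = c + n * d := by field_simp
    _ ≤ s n := h n

theorem stmt_3_general (N : ℕ) (A : Fin N → Matrix (Fin 2) (Fin 2) ℝ) (hinv : ∀ i, IsUnit (A i))
    (C τ : ℝ) (hC : 0 < C) (hτ0 : 0 < τ) (hτ1 : τ < 1)
    (hdom : ∀ (n : ℕ) (ii : Fin n → Fin N),
      abs (Matrix.det ((List.ofFn fun k => A (ii k)).prod)) /
          (mnorm ((List.ofFn fun k => A (ii k)).prod)) ^ 2 ≤ C * τ ^ n)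
    (ν : Measure (ℕ → Fin N)) [IsProbabilityMeasure ν]
    (χ₁ χ₂ : ℝ)
    (h1 : ∀ᵐ ii ∂ν, Tendsto (fun n : ℕ =>
        -(1 / (n : ℝ)) * Real.log (mnorm ((List.ofFn fun k : Fin n => A (ii k)).prod)))
        atTop (nhds χ₁))
    (h2 : ∀ᵐ ii ∂ν, Tendsto (fun n : ℕ =>
        -(1 / (n : ℝ)) * Real.log ((mnorm ((List.ofFn fun k : Fin n => (A (ii k))⁻¹).prod))⁻¹))
        atTop (nhds χ₂)) :
    χ₁ < χ₂ := by
  obtain ⟨ii, hχ₁, hχ₂⟩ := (h1.and h2).exists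
  set P : ℕ → Matrix (Fin 2) (Fin 2) ℝ := fun n => (List.ofFn fun k : Fin n => A (ii k)).prod
  set Q : ℕ → Matrix (Fin 2) (Fin 2) ℝ := fun n => (List.ofFn fun k : Fin n => (A (ii k))⁻¹).prod
  have hdetP (n : ℕ) : (P n).det ≠ 0 :=
    ((Matrix.isUnit_iff_isUnit_det _).mp (List.prod_isUnit (by simp [hinv]))).ne_zero
  have hbound (n : ℕ) :
      -Real.log C / 2 + n * (-Real.log τ / 2) ≤
        Real.log (mnorm (P n)) + Real.log (mnorm (Q n)) := by
    have h := neg_log_le_two_mul_log_add_log (by positivity)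
      (one_le_mul_mnorm_mul_mnorm_sq (hdetP n) (Matrix.det_list_prod_ofFn_inv _) (hdom n (ii ·)))
    rw [Real.log_mul hC.ne' (by positivity), Real.log_pow] at h
    linarith
  have hgap : Tendsto (fun n : ℕ => (Real.log (mnorm (P n)) + Real.log (mnorm (Q n))) / n)
      atTop (𝓝 (χ₂ - χ₁)) :=
    (hχ₂.sub hχ₁).congr fun n => by rw [Real.log_inv]; ring
  linarith [le_of_tendsto_div_of_affine_le hgap hbound, Real.log_neg hτ0 hτ1]

/-- Domination `|det(A_ii)| / ‖A_ii‖² ≤ C τ^{|ii|}` forces every σ-invariant ergodic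
probability measure to have a simple Lyapunov spectrum: `χ₁(ν) < χ₂(ν)`. -/
theorem stmt_3 (N : ℕ) (A : Fin N → Matrix (Fin 2) (Fin 2) ℝ) (hinv : ∀ i, IsUnit (A i))
    (C τ : ℝ) (hC : 0 < C) (hτ0 : 0 < τ) (hτ1 : τ < 1)
    (hdom : ∀ (n : ℕ) (ii : Fin n → Fin N),
      abs (Matrix.det ((List.ofFn fun k => A (ii k)).prod)) /
          (mnorm ((List.ofFn fun k => A (ii k)).prod)) ^ 2 ≤ C * τ ^ n)
    (ν : Measure (ℕ → Fin N)) [IsProbabilityMeasure ν]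
    (herg : Ergodic (fun ii k => ii (k + 1)) ν)
    (χ₁ χ₂ : ℝ)
    (h1 : ∀ᵐ ii ∂ν, Tendsto (fun n : ℕ =>
        -(1 / (n : ℝ)) * Real.log (mnorm ((List.ofFn fun k : Fin n => A (ii k)).prod)))
        atTop (nhds χ₁))
    (h2 : ∀ᵐ ii ∂ν, Tendsto (fun n : ℕ =>
        -(1 / (n : ℝ)) * Real.log ((mnorm ((List.ofFn fun k : Fin n => (A (ii k))⁻¹).prod))⁻¹))
        atTop (nhds χ₂)) :
    χ₁ < χ₂ :=
  stmt_3_general N A hinv C τ hC hτ0 hτ1 hdom ν χ₁ χ₂ h1 h2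
end

section
/- Fix 0 < γ < 1/2 < λ < 1 and set t₀ = (1-2λ)/(1-2γ) < 0. Let φ₁(x,y) = (λx, γy) and φ₂(x,y) = (λx + 1 - λ, γy + 1 - γ), and let Z ⊂ [0,1]² be the attractor of (φ₁, φ₂). Define P_t(x,y) = x - t y. Then for every t with t₀ < t ≤ 0, P_t(Z) = [0, 1 - t]. -/
/-!
Write `f_k(x, y) = λᵏx - tγᵏy`, the projection `P_t` seen through a word of length `k`
(up to translation). Then `f_k(Z) ⊆ [0, L_k]` with `L_k = λᵏ - tγᵏ`, and `f_k ∘ φ₁ = f_{k+1}`,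
`f_k ∘ φ₂ = f_{k+1} + d_k` with `d_k + L_{k+1} = L_k`. The condition `t₀ < t` gives
`d_k ≤ L_{k+1}`, i.e. `[0, L_k] = [0, L_{k+1}] ∪ [d_k, d_k + L_{k+1}]`: the two children of every
interval cover it. Descending `n` levels approximates every point of `[0, 1 - t]` by `P_t(Z)` up
to `L_n → 0`, and `P_t(Z)` is compact.
-/

open Set Filter Topology

section IntervalCover

variable {α : Type*} {Z : Set α} {φ₁ φ₂ : α → α} {f : ℕ → α → ℝ} {L d : ℕ → ℝ}

theorem exists_abs_sub_le_of_cover (hZ : Z.Nonempty) (hφ₁ : MapsTo φ₁ Z Z)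
    (hφ₂ : MapsTo φ₂ Z Z) (hf : ∀ k, MapsTo (f k) Z (Icc 0 (L k)))
    (hf₁ : ∀ k z, f k (φ₁ z) = f (k + 1) z) (hf₂ : ∀ k z, f k (φ₂ z) = f (k + 1) z + d k)
    (hd : ∀ k, d k ≤ L (k + 1)) (hL : ∀ k, L k ≤ d k + L (k + 1)) (n : ℕ) :
    ∀ k, ∀ s ∈ Icc 0 (L k), ∃ z ∈ Z, |f k z - s| ≤ L (k + n) := by
  induction n with
  | zero =>
    rintro k s ⟨hs₀, hs₁⟩
    obtain ⟨z, hz⟩ := hZ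
    obtain ⟨hz₀, hz₁⟩ := hf k hz
    rw [add_zero]
    exact ⟨z, hz, abs_sub_le_iff.2 ⟨by linarith, by linarith⟩⟩
  | succ n ih =>
    rintro k s ⟨hs₀, hs₁⟩
    rw [show k + (n + 1) = k + 1 + n by omega]
    rcases le_or_gt s (L (k + 1)) with hs | hs
    · obtain ⟨z, hz, hfz⟩ := ih (k + 1) s ⟨hs₀, hs⟩
      refine ⟨φ₁ z, hφ₁ hz, ?_⟩
      rwa [hf₁]
    · obtain ⟨z, hz, hfz⟩ := ih (k + 1) (s - d k) ⟨by linarith [hd k], by linarith [hL k]⟩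
      refine ⟨φ₂ z, hφ₂ hz, ?_⟩
      rwa [hf₂, ← sub_sub_eq_add_sub]

theorem image_eq_Icc_of_cover (hZ : Z.Nonempty) (hφ₁ : MapsTo φ₁ Z Z)
    (hφ₂ : MapsTo φ₂ Z Z) (hf : ∀ k, MapsTo (f k) Z (Icc 0 (L k)))
    (hf₁ : ∀ k z, f k (φ₁ z) = f (k + 1) z) (hf₂ : ∀ k z, f k (φ₂ z) = f (k + 1) z + d k)
    (hd : ∀ k, d k ≤ L (k + 1)) (hL : ∀ k, L k ≤ d k + L (k + 1))
    (hL₀ : Tendsto L atTop (𝓝 0)) (hclosed : IsClosed (f 0 '' Z)) :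
    f 0 '' Z = Icc 0 (L 0) := by
  refine (hf 0).image_subset.antisymm fun s hs => ?_
  rw [← hclosed.closure_eq, Metric.mem_closure_iff]
  intro ε hε
  obtain ⟨n, hn⟩ := (hL₀.eventually (gt_mem_nhds hε)).exists
  obtain ⟨z, hz, hfz⟩ := exists_abs_sub_le_of_cover hZ hφ₁ hφ₂ hf hf₁ hf₂ hd hL n 0 s hs
  rw [zero_add] at hfz
  exact ⟨f 0 z, mem_image_of_mem _ hz, by rw [Real.dist_eq, abs_sub_comm]; linarith⟩

end IntervalCover

theorem mul_sub_mul_mem_Icc {a b x y : ℝ} (ha : 0 ≤ a) (hb : b ≤ 0) (hx : x ∈ Icc 0 1)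
    (hy : y ∈ Icc 0 1) : a * x - b * y ∈ Icc 0 (a - b) := by
  obtain ⟨hx₀, hx₁⟩ := hx
  obtain ⟨hy₀, hy₁⟩ := hy
  constructor <;> nlinarith

theorem pow_mul_one_sub_two_mul_le {γ lam t : ℝ} (hγ : 0 ≤ γ) (hγlam : γ ≤ lam)
    (hlam : 1 ≤ 2 * lam) (ht : 1 - 2 * lam ≤ t * (1 - 2 * γ)) (k : ℕ) :
    lam ^ k * (1 - 2 * lam) ≤ t * γ ^ k * (1 - 2 * γ) :=
  calc lam ^ k * (1 - 2 * lam)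
      ≤ γ ^ k * (1 - 2 * lam) :=
        mul_le_mul_of_nonpos_right (pow_le_pow_left₀ hγ hγlam k) (by linarith)
    _ ≤ γ ^ k * (t * (1 - 2 * γ)) := mul_le_mul_of_nonneg_left ht (pow_nonneg hγ k)
    _ = t * γ ^ k * (1 - 2 * γ) := by ring

/-- For `0 < γ < 1/2 < λ < 1` and the attractor `Z` of
`φ₁(x,y) = (λx, γy)`, `φ₂(x,y) = (λx + 1 - λ, γy + 1 - γ)`, the projection
`P_t(x,y) = x - t y` maps `Z` onto `[0, 1 - t]` for every `(1-2λ)/(1-2γ) < t ≤ 0`. -/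
theorem stmt_10 (γ lam : ℝ) (h1 : 0 < γ) (h2 : γ < 1 / 2) (h3 : 1 / 2 < lam) (h4 : lam < 1)
    (φ₁ φ₂ : ℝ × ℝ → ℝ × ℝ)
    (hφ₁ : ∀ q, φ₁ q = (lam * q.1, γ * q.2))
    (hφ₂ : ∀ q, φ₂ q = (lam * q.1 + 1 - lam, γ * q.2 + 1 - γ))
    (Z : Set (ℝ × ℝ)) (hZc : IsCompact Z) (hZne : Z.Nonempty)
    (hZ : Z = φ₁ '' Z ∪ φ₂ '' Z) (hZsub : Z ⊆ Set.Icc ((0 : ℝ), (0 : ℝ)) (1, 1)) :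
    ∀ t : ℝ, (1 - 2 * lam) / (1 - 2 * γ) < t → t ≤ 0 →
      (fun q : ℝ × ℝ => q.1 - t * q.2) '' Z = Set.Icc 0 (1 - t) := by
  intro t ht₀ ht
  have hcover := pow_mul_one_sub_two_mul_le h1.le (by linarith) (by linarith)
    ((div_lt_iff₀ (by linarith)).1 ht₀).le
  have hφ₁Z : MapsTo φ₁ Z Z := mapsTo_iff_image_subset.2 (subset_union_left.trans hZ.symm.subset)
  have hφ₂Z : MapsTo φ₂ Z Z := mapsTo_iff_image_subset.2 (subset_union_right.trans hZ.symm.subset)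
  rw [← Icc_prod_Icc] at hZsub
  have hbounds : ∀ k : ℕ, MapsTo (fun q : ℝ × ℝ => lam ^ k * q.1 - t * γ ^ k * q.2) Z
      (Icc 0 (lam ^ k - t * γ ^ k)) := fun k q hq =>
    mul_sub_mul_mem_Icc (by positivity) (mul_nonpos_of_nonpos_of_nonneg ht (by positivity))
      (hZsub hq).1 (hZsub hq).2
  have hL₀ : Tendsto (fun k : ℕ => lam ^ k - t * γ ^ k) atTop (𝓝 0) := by
    simpa using (tendsto_pow_atTop_nhds_zero_of_lt_one (by linarith) h4).sub
      ((tendsto_pow_atTop_nhds_zero_of_lt_one h1.le (by linarith)).const_mul t)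
  have hclosed : IsClosed ((fun q : ℝ × ℝ => q.1 - t * q.2) '' Z) :=
    (hZc.image (by fun_prop)).isClosed
  simpa using image_eq_Icc_of_cover (d := fun k => lam ^ k * (1 - lam) - t * γ ^ k * (1 - γ))
    hZne hφ₁Z hφ₂Z hbounds (fun k q => by simp only [hφ₁]; ring)
    (fun k q => by simp only [hφ₂]; ring) (fun k => by linear_combination hcover k)
    (fun k => by linear_combination) hL₀ (by simpa using hclosed)
end

section
/- Let E ⊂ ℝ² be compact and let T be a weak tangent set of E, i.e. there exist points x_n ∈ E and positive reals r_n → 0 such that M_{x_n,r_n}(E) ∩ B(0,1) → T in the Hausdorff metric, where M_{x,r}(z) = (z - x)/r. Then dimH(T) ≤ dimA(E), where dimA denotes the Assouad dimension. -/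
open Metric MeasureTheory Filter
open scoped ENNReal NNReal

/-- The Assouad dimension of a set `E` in a metric space: the infimum of all `s > 0` for
which there is `C ≥ 1` such that every `E ∩ B(x,R)` can be covered by at most `C (R/r)^s`
balls of radius `r`, for all `0 < r < R`. -/
noncomputable def assouadDim {X : Type*} [MetricSpace X] (E : Set X) : ℝ≥0∞ :=
  sInf (ENNReal.ofReal '' {s : ℝ | 0 < s ∧ ∃ C : ℝ, 1 ≤ C ∧
    ∀ x ∈ E, ∀ r R : ℝ, 0 < r → r < R →
      ∃ F : Finset X, (F.card : ℝ) ≤ C * (R / r) ^ s ∧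
        E ∩ closedBall x R ⊆ ⋃ y ∈ F, closedBall y r})

/-!
Fix `s` in the set defining `assouadDim E`. Rescaling the Assouad covering of `E ∩ B(xₙ, rₙ)`
by balls of radius `(ε/2) rₙ` covers `M_{xₙ,rₙ}(E) ∩ B(0,1)` by at most `C (2/ε)^s` balls of
radius `ε/2`; once the Hausdorff distance to `T` is below `ε/2`, the concentric balls of radius
`ε` cover `T`. Covers of `T` by `O(ε⁻ˢ)` balls of radius `ε` for every small `ε` give
`μH[d] T = 0` for all `d > s`, hence `dimH T ≤ s`.
-/

open Topology

section Magnify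

variable {V : Type*} [NormedAddCommGroup V] [NormedSpace ℝ V]

/-- The blow-up `M_{x,r}(z) = (z - x) / r`. -/
noncomputable def magnify (x : V) (r : ℝ) (z : V) : V := r⁻¹ • (z - x)

theorem dist_magnify {x : V} {r : ℝ} (hr : 0 < r) (z w : V) :
    dist (magnify x r z) (magnify x r w) = dist z w / r := by
  rw [magnify, magnify, dist_smul₀, dist_sub_right, Real.norm_of_nonneg (inv_pos.2 hr).le,
    inv_mul_eq_div]

theorem magnify_mem_closedBall_zero_one {x : V} {r : ℝ} (hr : 0 < r) {z : V} :
    magnify x r z ∈ closedBall 0 1 ↔ z ∈ closedBall x r := by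
  have hx : magnify x r x = 0 := by simp [magnify]
  rw [mem_closedBall, mem_closedBall, ← hx, dist_magnify hr, div_le_one hr]

theorem image_magnify_inter_closedBall_subset [DecidableEq V] {E : Set V} {F : Finset V}
    {x : V} {r ε : ℝ} (hr : 0 < r) (hF : E ∩ closedBall x r ⊆ ⋃ y ∈ F, closedBall y (ε * r)) :
    magnify x r '' E ∩ closedBall 0 1 ⊆ ⋃ y ∈ F.image (magnify x r), closedBall y ε := by
  rintro _ ⟨⟨z, hzE, rfl⟩, hz⟩
  obtain ⟨y, hyF, hzy⟩ :=
    Set.mem_iUnion₂.1 (hF ⟨hzE, (magnify_mem_closedBall_zero_one hr).1 hz⟩)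
  refine Set.mem_iUnion₂.2 ⟨magnify x r y, Finset.mem_image_of_mem _ hyF, ?_⟩
  rw [mem_closedBall, dist_magnify hr, div_le_iff₀ hr]
  exact hzy

end Magnify

theorem subset_iUnion_closedBall_add_of_hausdorffEDist_lt {X : Type*} [PseudoMetricSpace X]
    {A T : Set X} {G : Finset X} {ε δ : ℝ} (hA : A ⊆ ⋃ g ∈ G, closedBall g ε)
    (hAT : Metric.hausdorffEDist A T < ENNReal.ofReal δ) :
    T ⊆ ⋃ g ∈ G, closedBall g (ε + δ) := by
  intro p hp
  obtain ⟨q, hqA, hpq⟩ :=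
    Metric.exists_edist_lt_of_hausdorffEDist_lt hp (Metric.hausdorffEDist_comm.trans_lt hAT)
  obtain ⟨g, hgG, hqg⟩ := Set.mem_iUnion₂.1 (hA hqA)
  refine Set.mem_iUnion₂.2 ⟨g, hgG, ?_⟩
  rw [mem_closedBall] at hqg ⊢
  linarith [dist_triangle p q g, edist_lt_ofReal.1 hpq, dist_comm p q]

section BoxCounting

variable {X : Type*} [MetricSpace X]

theorem ediam_closedBall_le_ofReal (x : X) (ε : ℝ) :
    ediam (closedBall x ε) ≤ ENNReal.ofReal (2 * ε) :=
  ediam_le_of_forall_dist_le fun p hp q hq => by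
    linarith [dist_triangle_right p q x, mem_closedBall.1 hp, mem_closedBall.1 hq]

theorem sum_ediam_closedBall_rpow_le (G : Finset X) {ε d : ℝ} (hε : 0 ≤ ε) (hd : 0 ≤ d) :
    ∑ g : G, ediam (closedBall (g : X) ε) ^ d ≤ ENNReal.ofReal (G.card * (2 * ε) ^ d) :=
  calc ∑ g : G, ediam (closedBall (g : X) ε) ^ d
      ≤ ∑ _g : G, ENNReal.ofReal ((2 * ε) ^ d) := by
        refine Finset.sum_le_sum fun g _ => ?_
        rw [← ENNReal.ofReal_rpow_of_nonneg (by positivity) hd]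
        exact ENNReal.rpow_le_rpow (ediam_closedBall_le_ofReal _ ε) hd
    _ = ENNReal.ofReal (G.card * (2 * ε) ^ d) := by
        rw [Finset.sum_const, Finset.card_univ, Fintype.card_coe, nsmul_eq_mul,
          ENNReal.ofReal_mul (Nat.cast_nonneg _), ENNReal.ofReal_natCast]

variable [MeasurableSpace X] [BorelSpace X]

theorem hausdorffMeasure_eq_zero_of_forall_card_cover_le {T : Set X} {s d C : ℝ}
    (hd : 0 ≤ d) (hsd : s < d)
    (hcover : ∀ ε, 0 < ε → ε < 1 →
      ∃ G : Finset X, (G.card : ℝ) ≤ C * ε⁻¹ ^ s ∧ T ⊆ ⋃ g ∈ G, closedBall g ε) :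
    μH[d] T = 0 := by
  choose! G hGcard hGcover using hcover
  have hIoo : ∀ᶠ ε in 𝓝[>] (0 : ℝ), ε ∈ Set.Ioo 0 1 := Ioo_mem_nhdsGT one_pos
  have hsum : ∀ ε ∈ Set.Ioo (0 : ℝ) 1,
      ∑ g : G ε, ediam (closedBall (g : X) ε) ^ d ≤ ENNReal.ofReal (C * 2 ^ d * ε ^ (d - s)) := by
    rintro ε ⟨hε, hε1⟩
    refine (sum_ediam_closedBall_rpow_le (G ε) hε.le hd).trans (ENNReal.ofReal_le_ofReal ?_)
    calc (G ε).card * (2 * ε) ^ d ≤ C * ε⁻¹ ^ s * (2 * ε) ^ d :=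
          mul_le_mul_of_nonneg_right (hGcard ε hε hε1) (by positivity)
      _ = C * 2 ^ d * ε ^ (d - s) := by
          rw [Real.mul_rpow zero_le_two hε.le, Real.inv_rpow hε.le, Real.rpow_sub hε]
          ring
  have hdiam_lim : Tendsto (fun ε : ℝ => ENNReal.ofReal (2 * ε)) (𝓝[>] 0) (𝓝 0) := by
    simpa using (ENNReal.tendsto_ofReal ((continuous_const_mul (2 : ℝ)).tendsto 0)).mono_left
      nhdsWithin_le_nhds
  have hsum_lim :
      Tendsto (fun ε : ℝ => ENNReal.ofReal (C * 2 ^ d * ε ^ (d - s))) (𝓝[>] 0) (𝓝 0) := by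
    have := ((Real.continuousAt_rpow_const 0 (d - s) (Or.inr (sub_pos.2 hsd).le)).tendsto.const_mul
      (C * 2 ^ d)).mono_left (nhdsWithin_le_nhds (s := Set.Ioi 0))
    rw [Real.zero_rpow (sub_pos.2 hsd).ne', mul_zero] at this
    simpa using ENNReal.tendsto_ofReal this
  refine nonpos_iff_eq_zero.1 ?_
  calc μH[d] T ≤ liminf (fun ε => ∑ g : G ε, ediam (closedBall (g : X) ε) ^ d) (𝓝[>] 0) :=
        Measure.hausdorffMeasure_le_liminf_sum (ι := fun ε => G ε) d T _ hdiam_lim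
          (fun ε g => closedBall (g : X) ε)
          (.of_forall fun ε g => ediam_closedBall_le_ofReal (g : X) ε)
          (hIoo.mono fun ε hε p hp => by
            obtain ⟨g, hg, hpg⟩ := Set.mem_iUnion₂.1 (hGcover ε hε.1 hε.2 hp)
            exact Set.mem_iUnion.2 ⟨⟨g, hg⟩, hpg⟩)
    _ ≤ liminf (fun ε : ℝ => ENNReal.ofReal (C * 2 ^ d * ε ^ (d - s))) (𝓝[>] 0) :=
        liminf_le_liminf (hIoo.mono hsum)
    _ = 0 := hsum_lim.liminf_eq

theorem dimH_le_of_forall_card_cover_le {T : Set X} {s C : ℝ}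
    (hcover : ∀ ε, 0 < ε → ε < 1 →
      ∃ G : Finset X, (G.card : ℝ) ≤ C * ε⁻¹ ^ s ∧ T ⊆ ⋃ g ∈ G, closedBall g ε) :
    dimH T ≤ ENNReal.ofReal s := by
  refine dimH_le fun d hd => ?_
  by_contra! hsd
  rw [← ENNReal.ofReal_coe_nnreal, ENNReal.ofReal_lt_ofReal_iff'] at hsd
  exact ENNReal.zero_ne_top <|
    (hausdorffMeasure_eq_zero_of_forall_card_cover_le d.2 hsd.1 hcover).symm.trans hd

end BoxCounting

theorem stmt_13_general (E : Set (EuclideanSpace ℝ (Fin 2)))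
    (x : ℕ → EuclideanSpace ℝ (Fin 2)) (hx : ∀ n, x n ∈ E)
    (r : ℕ → ℝ) (hr : ∀ n, 0 < r n)
    (T : Set (EuclideanSpace ℝ (Fin 2)))
    (hconv : Tendsto
      (fun n => EMetric.hausdorffEdist
        (((fun z => (r n)⁻¹ • (z - x n)) '' E) ∩ closedBall 0 1) T)
      atTop (nhds 0)) :
    dimH T ≤ assouadDim E := by
  refine le_sInf ?_
  rintro _ ⟨s, ⟨-, C, -, hC⟩, rfl⟩
  refine dimH_le_of_forall_card_cover_le (C := C * 2 ^ s) fun ε hε hε1 => ?_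
  obtain ⟨n, hn⟩ := (hconv.eventually_lt_const (ENNReal.ofReal_pos.2 (half_pos hε))).exists
  obtain ⟨F, hFcard, hFcover⟩ := hC (x n) (hx n) (ε / 2 * r n) (r n)
    (mul_pos (half_pos hε) (hr n)) (mul_lt_of_lt_one_left (hr n) (by linarith))
  refine ⟨F.image (magnify (x n) (r n)), ?_, ?_⟩
  · calc ((F.image (magnify (x n) (r n))).card : ℝ) ≤ F.card := mod_cast Finset.card_image_le
      _ ≤ C * (r n / (ε / 2 * r n)) ^ s := hFcard
      _ = C * 2 ^ s * ε⁻¹ ^ s := by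
        rw [mul_assoc, ← Real.mul_rpow zero_le_two (inv_pos.2 hε).le]
        congr 2
        field_simp [(hr n).ne']
  · simpa using subset_iUnion_closedBall_add_of_hausdorffEDist_lt
      (image_magnify_inter_closedBall_subset (hr n) hFcover) hn

/-- The Hausdorff dimension of any weak tangent set of a compact `E ⊆ ℝ²` is at most the
Assouad dimension of `E`. -/
theorem stmt_13 (E : Set (EuclideanSpace ℝ (Fin 2))) (hE : IsCompact E)
    (x : ℕ → EuclideanSpace ℝ (Fin 2)) (hx : ∀ n, x n ∈ E)
    (r : ℕ → ℝ) (hr : ∀ n, 0 < r n) (hr0 : Tendsto r atTop (nhds 0))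
    (T : Set (EuclideanSpace ℝ (Fin 2))) (hT : IsClosed T)
    (hconv : Tendsto
      (fun n => EMetric.hausdorffEdist
        (((fun z => (r n)⁻¹ • (z - x n)) '' E) ∩ closedBall 0 1) T)
      atTop (nhds 0)) :
    dimH T ≤ assouadDim E :=
  stmt_13_general E x hx r hr T hconv
end
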